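/- Let A be the adjacency matrix of a simple digraph G with vertices v_1,...,v_n, and suppose (v_i, v_j) is an edge of G (i.e., A_{ij} = 1). Then E^+(v_i) · E^-(v_j) ≥ 1, where E^+(v_i) = ((AA^T)^{1/2})_{ii} and E^-(v_j) = ((A^TA)^{1/2})_{jj}. -/

import Mathlib

open Matrix Finset

noncomputable section

/-- For a real matrix, `A * Aᵀ` is positive semidefinite. -/
theorem mulTranspose_posSemidef {m k : Type*} [Fintype m] [Fintype k] (A : Matrix m k ℝ) :
    (A * Aᵀ).PosSemidef := by
  have h := Matrix.posSemidef_self_mul_conjTranspose A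
  rwa [Matrix.conjTranspose_eq_transpose_of_trivial] at h

/-- For a real matrix, `Aᵀ * A` is positive semidefinite. -/
theorem transposeMul_posSemidef {m k : Type*} [Fintype m] [Fintype k] (A : Matrix m k ℝ) :
    (Aᵀ * A).PosSemidef := by
  simpa using mulTranspose_posSemidef Aᵀ

/-- The psd square root, as `Matrix.PosSemidef.sqrt` was defined in Mathlib (Dec 2024). -/
def psdSqrt {n : Type*} [Fintype n] [DecidableEq n] {A : Matrix n n ℝ} (hA : A.PosSemidef) :
    Matrix n n ℝ :=
  (hA.1.eigenvectorUnitary : Matrix n n ℝ) * diagonal ((↑) ∘ (Real.sqrt ·) ∘ hA.1.eigenvalues) *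
    (star hA.1.eigenvectorUnitary : Matrix n n ℝ)

/-- `|A|⁺ = (A Aᵀ)^{1/2}` (psd square root). -/
def absPlus {V : Type*} [Fintype V] [DecidableEq V] (A : Matrix V V ℝ) : Matrix V V ℝ :=
  psdSqrt (mulTranspose_posSemidef A)

/-- `|A|⁻ = (Aᵀ A)^{1/2}` (psd square root). -/
def absMinus {V : Type*} [Fintype V] [DecidableEq V] (A : Matrix V V ℝ) : Matrix V V ℝ :=
  psdSqrt (transposeMul_posSemidef A)

/-- The (Nikiforov) energy: `Tr((A Aᵀ)^{1/2})`, the sum of the singular values of `A`. -/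
def energy {V : Type*} [Fintype V] [DecidableEq V] (A : Matrix V V ℝ) : ℝ := (absPlus A).trace

/-- 0-1 adjacency matrix of the digraph with edge relation `E`. -/
def adjMat {V : Type*} [Fintype V] [DecidableEq V] (E : V → V → Prop) [DecidableRel E] :
    Matrix V V ℝ := Matrix.of fun i j => if E i j then 1 else 0

/-- Out-degree `d⁺(v)`. -/
def outDeg {V : Type*} [Fintype V] (E : V → V → Prop) [DecidableRel E] (v : V) : ℕ :=
  (univ.filter (fun w => E v w)).card

/-- In-degree `d⁻(w)`. -/
def inDeg {V : Type*} [Fintype V] (E : V → V → Prop) [DecidableRel E] (w : V) : ℕ :=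
  (univ.filter (fun v => E v w)).card

/-- Directed Randic index `R(G) = (1/2) Σ_{(v,w)∈E} 1/√(d⁺(v) d⁻(w))`. -/
def randic {V : Type*} [Fintype V] (E : V → V → Prop) [DecidableRel E] : ℝ :=
  (1/2) * ∑ v, ∑ w, if E v w then 1 / Real.sqrt (outDeg E v * inDeg E w) else 0

/-- Number of arcs of the digraph. -/
def numArcs {V : Type*} [Fintype V] (E : V → V → Prop) [DecidableRel E] : ℕ :=
  (univ.filter (fun p : V × V => E p.1 p.2)).card

/-- Maximum over vertices of in- and out-degrees, `Δ(G)`. -/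
def maxDeg {V : Type*} [Fintype V] (E : V → V → Prop) [DecidableRel E] : ℕ :=
  univ.sup (fun v => max (outDeg E v) (inDeg E v))


section Key

open Matrix

variable {m : Type*} [Fintype m] [DecidableEq m]

open scoped MatrixOrder in
lemma psdSqrt_eq_cfcSqrt {B : Matrix m m ℝ} (hB : B.PosSemidef) : psdSqrt hB = CFC.sqrt B := by
  rw [CFC.sqrt_eq_real_sqrt B hB.nonneg, cfcₙ_eq_cfc, hB.1.cfc_eq, Matrix.IsHermitian.cfc,
    Unitary.conjStarAlgAut_apply]
  rfl

open scoped MatrixOrder in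
lemma eq_psdSqrt_of_sq_eq {B D : Matrix m m ℝ} (hD : D.PosSemidef) (hB : B.PosSemidef)
    (h : D ^ 2 = B) : D = psdSqrt hB := by
  rw [psdSqrt_eq_cfcSqrt]
  exact (CFC.sqrt_unique (by rw [← pow_two]; exact h) hD.nonneg).symm

lemma key_sq_le (A : Matrix m m ℝ) (i j : m) :
    (A i j) ^ 2 ≤ psdSqrt (mulTranspose_posSemidef A) i i * psdSqrt (transposeMul_posSemidef A) j j := by
  classical
  set hH := mulTranspose_posSemidef A with hHdef
  set hG := transposeMul_posSemidef A with hGdef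
  set U : Matrix m m ℝ := (hH.1.eigenvectorUnitary : Matrix m m ℝ) with hUdef
  set lam : m → ℝ := hH.1.eigenvalues with hlamdef
  have hlam : ∀ k, 0 ≤ lam k := hH.eigenvalues_nonneg
  have hUstar : U * star U = 1 :=
    (Matrix.mem_unitaryGroup_iff).mp hH.1.eigenvectorUnitary.2
  have hstarU : star U * U = 1 :=
    (Matrix.mem_unitaryGroup_iff').mp hH.1.eigenvectorUnitary.2
  have hstarU_eq : star U = Uᵀ := by
    rw [Matrix.star_eq_conjTranspose, Matrix.conjTranspose_eq_transpose_of_trivial]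
  have hspec : Uᵀ * (A * Aᵀ) * U = diagonal lam := by
    have := hH.1.conjStarAlgAut_star_eigenvectorUnitary
    simp only [Unitary.conjStarAlgAut_apply, Unitary.coe_star, star_star] at this
    rw [hstarU_eq] at this
    simpa using this
  set W : Matrix m m ℝ := Uᵀ * A with hWdef
  have hWWt : W * Wᵀ = diagonal lam := by
    have : W * Wᵀ = Uᵀ * (A * Aᵀ) * U := by
      rw [hWdef, Matrix.transpose_mul, Matrix.transpose_transpose]
      noncomm_ring
    rw [this, hspec]
  have fact1 : ∀ k, ∑ t, (W k t) ^ 2 = lam k := by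
    intro k
    have := congrFun (congrFun hWWt k) k
    simpa [Matrix.mul_apply, Matrix.diagonal_apply_eq, pow_two] using this
  have fact2 : ∀ k, lam k = 0 → ∀ t, W k t = 0 := by
    intro k hk t
    have h0 : ∑ t, (W k t) ^ 2 = 0 := by rw [fact1 k, hk]
    have := (Finset.sum_eq_zero_iff_of_nonneg (fun t _ => sq_nonneg (W k t))).mp h0 t
      (Finset.mem_univ t)
    exact pow_eq_zero_iff two_ne_zero |>.mp this
  have fact3 : A i j = ∑ k, U i k * W k j := by
    have : U * W = A := by
      rw [hWdef, ← mul_assoc, ← hstarU_eq, hUstar, one_mul]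
    conv_lhs => rw [← this]
    rw [Matrix.mul_apply]
  -- B entry
  have entry_eq : ∀ (d : m → ℝ), (U * diagonal d * star U) i i = ∑ k, d k * (U i k) ^ 2 := by
    intro d
    rw [Matrix.mul_apply]
    refine Finset.sum_congr rfl fun k _ => ?_
    rw [Matrix.mul_diagonal, hstarU_eq, Matrix.transpose_apply]
    ring
  have hB : psdSqrt hH i i = ∑ k, Real.sqrt (lam k) * (U i k) ^ 2 := by
    have hsq : psdSqrt hH = U * diagonal (fun k => Real.sqrt (lam k)) * star U := by
      rfl
    rw [hsq, entry_eq]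
  -- C entry
  set g : m → ℝ := fun k => if lam k = 0 then 0 else (Real.sqrt (lam k))⁻¹ with hgdef
  have hg : ∀ k, 0 ≤ g k := by
    intro k
    rw [hgdef]
    dsimp only
    split
    · exact le_refl _
    · positivity
  set D : Matrix m m ℝ := Wᵀ * diagonal g * W with hDdef
  have hDpsd : D.PosSemidef := by
    have hsg : ∀ k, Real.sqrt (g k) * Real.sqrt (g k) = g k := fun k =>
      Real.mul_self_sqrt (hg k)
    have : D = (diagonal (fun k => Real.sqrt (g k)) * W)ᵀ * (diagonal (fun k => Real.sqrt (g k)) * W) := by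
      rw [Matrix.transpose_mul, Matrix.diagonal_transpose, mul_assoc, ← mul_assoc (diagonal _),
        Matrix.diagonal_mul_diagonal]
      have hgg : (fun k => Real.sqrt (g k) * Real.sqrt (g k)) = g := funext hsg
      rw [hgg, hDdef, mul_assoc]
    rw [this]
    have := Matrix.posSemidef_conjTranspose_mul_self (diagonal (fun k => Real.sqrt (g k)) * W)
    rwa [Matrix.conjTranspose_eq_transpose_of_trivial] at this
  have heW : diagonal (fun k => g k * (lam k * g k)) * W = W := by
    ext k t
    rw [Matrix.diagonal_mul]
    by_cases hk : lam k = 0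
    · rw [fact2 k hk t, mul_zero]
    · have hlk : 0 < lam k := lt_of_le_of_ne (hlam k) (Ne.symm hk)
      have hs : Real.sqrt (lam k) ≠ 0 := ne_of_gt (Real.sqrt_pos.mpr hlk)
      have hsq2 := Real.sq_sqrt (hlam k)
      have : g k * (lam k * g k) = 1 := by
        rw [hgdef]
        simp only [hk, if_false]
        rw [← hsq2]
        field_simp
        rw [Real.sqrt_sq (Real.sqrt_nonneg _)]
      rw [this, one_mul]
  have hDsq : D ^ 2 = Aᵀ * A := by
    have h1 : D * D = Wᵀ * (diagonal (fun k => g k * (lam k * g k)) * W) := by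
      rw [hDdef]
      calc Wᵀ * diagonal g * W * (Wᵀ * diagonal g * W)
          = Wᵀ * (diagonal g * ((W * Wᵀ) * (diagonal g * W))) := by noncomm_ring
        _ = Wᵀ * (diagonal g * (diagonal lam * (diagonal g * W))) := by rw [hWWt]
        _ = Wᵀ * ((diagonal g * (diagonal lam * diagonal g)) * W) := by noncomm_ring
        _ = Wᵀ * (diagonal (fun k => g k * (lam k * g k)) * W) := by
            rw [Matrix.diagonal_mul_diagonal, Matrix.diagonal_mul_diagonal]
    have h2 : Wᵀ * W = Aᵀ * A := by
      rw [hWdef, Matrix.transpose_mul, Matrix.transpose_transpose]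
      calc Aᵀ * U * (Uᵀ * A) = Aᵀ * ((U * Uᵀ) * A) := by noncomm_ring
        _ = Aᵀ * A := by rw [← hstarU_eq, hUstar, one_mul]
    rw [pow_two, h1, heW, h2]
  have hDC : D = psdSqrt hG := eq_psdSqrt_of_sq_eq hDpsd hG hDsq
  have hC : psdSqrt hG j j = ∑ k, g k * (W k j) ^ 2 := by
    rw [← hDC, hDdef, Matrix.mul_apply]
    refine Finset.sum_congr rfl fun k _ => ?_
    rw [Matrix.mul_diagonal, Matrix.transpose_apply]
    ring
  -- Cauchy-Schwarz
  set f1 : m → ℝ := fun k => Real.sqrt (Real.sqrt (lam k)) * U i k with hf1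
  set f2 : m → ℝ := fun k => Real.sqrt (g k) * W k j with hf2
  have hA_eq : A i j = ∑ k, f1 k * f2 k := by
    rw [fact3]
    refine Finset.sum_congr rfl fun k _ => ?_
    simp only [hf1, hf2]
    by_cases hk : lam k = 0
    · rw [fact2 k hk j]
      ring
    · have hlk : 0 < lam k := lt_of_le_of_ne (hlam k) (Ne.symm hk)
      have hsl : 0 < Real.sqrt (lam k) := Real.sqrt_pos.mpr hlk
      have hgk : g k = (Real.sqrt (lam k))⁻¹ := by rw [hgdef]; simp [hk]
      have : Real.sqrt (Real.sqrt (lam k)) * Real.sqrt (g k) = 1 := by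
        rw [hgk, Real.sqrt_inv, mul_inv_cancel₀ (Real.sqrt_ne_zero'.mpr (Real.sqrt_pos.mpr hlk))]
      calc U i k * W k j = (Real.sqrt (Real.sqrt (lam k)) * Real.sqrt (g k)) * (U i k * W k j) := by
            rw [this, one_mul]
        _ = Real.sqrt (Real.sqrt (lam k)) * U i k * (Real.sqrt (g k) * W k j) := by ring
  have hCS := Finset.sum_mul_sq_le_sq_mul_sq Finset.univ f1 f2
  have hs1 : ∑ k, f1 k ^ 2 = psdSqrt hH i i := by
    rw [hB]
    refine Finset.sum_congr rfl fun k _ => ?_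
    rw [hf1, mul_pow, Real.sq_sqrt (Real.sqrt_nonneg (lam k))]
  have hs2 : ∑ k, f2 k ^ 2 = psdSqrt hG j j := by
    rw [hC]
    refine Finset.sum_congr rfl fun k _ => ?_
    rw [hf2, mul_pow, Real.sq_sqrt (hg k)]
  rw [hA_eq, ← hs1, ← hs2]
  exact hCS

end Key

/-- If `(v_i, v_j)` is an edge of a simple digraph then `E⁺(v_i) · E⁻(v_j) ≥ 1`. -/
theorem stmt_1 {n : ℕ} (E : Fin n → Fin n → Prop) [DecidableRel E]
    (hloop : ∀ v, ¬ E v v) (i j : Fin n) (hij : E i j) :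
    1 ≤ (absPlus (adjMat E)) i i * (absMinus (adjMat E)) j j := by
  have h1 : adjMat E i j = 1 := by
    simp [adjMat, hij]
  have := key_sq_le (adjMat E) i j
  rw [h1, one_pow] at this
  exact this
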